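/- Let X be a real vector space equipped with the core convex topology τ_c, and let A be a nonempty subset of X having finitely many convex components A_1, …, A_n, each of which is relatively solid. Then cl_c(A) = ∪_{i=1}^{n} vcl(A_i). -/

import Mathlib

open Pointwise

/-- Algebraic interior (core) of a set `A` in a real vector space:
`cor A = {x ∈ A | ∀ d, ∃ δ > 0, ∀ λ ∈ [0, δ], x + λ • d ∈ A}`. -/
def cor {X : Type*} [AddCommGroup X] [Module ℝ X] (A : Set X) : Set X :=
  {x | x ∈ A ∧ ∀ d : X, ∃ δ : ℝ, 0 < δ ∧ ∀ lam ∈ Set.Icc (0 : ℝ) δ, x + lam • d ∈ A}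

/-- Relative algebraic interior of `A`: directions are taken in `L(A) = span (A - A)`. -/
def icr {X : Type*} [AddCommGroup X] [Module ℝ X] (A : Set X) : Set X :=
  {x | x ∈ A ∧ ∀ d ∈ Submodule.span ℝ (A - A),
    ∃ δ : ℝ, 0 < δ ∧ ∀ lam ∈ Set.Icc (0 : ℝ) δ, x + lam • d ∈ A}

/-- Vectorial closure of `A`:
`vcl A = {b | ∃ d, ∀ δ > 0, ∃ λ ∈ [0, δ], b + λ • d ∈ A}`. -/
def vcl {X : Type*} [AddCommGroup X] [Module ℝ X] (A : Set X) : Set X :=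
  {b | ∃ d : X, ∀ δ : ℝ, 0 < δ → ∃ lam ∈ Set.Icc (0 : ℝ) δ, b + lam • d ∈ A}

/-- The core convex topology `τ_c`: the topology whose open sets are the unions of
members of `𝔅 = {A | A convex and cor A = A}`; since `𝔅` is a topological basis
(closed under binary intersection, contains `X` and `∅`), this is the topology
generated by `𝔅`. -/
def tauc (X : Type*) [AddCommGroup X] [Module ℝ X] : TopologicalSpace X :=
  TopologicalSpace.generateFrom {A : Set X | Convex ℝ A ∧ cor A = A}

/-- `B` is a convex component of `A`: a maximal (w.r.t. inclusion) convex subset of `A`. -/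
def IsConvexComponent {X : Type*} [AddCommGroup X] [Module ℝ X] (A B : Set X) : Prop :=
  B ⊆ A ∧ Convex ℝ B ∧ ∀ C : Set X, C ⊆ A → Convex ℝ C → B ⊆ C → C = B

/-
Fix a convex component `B` and `a ∈ icr B`. If `x` lies in the `τ_c`-closure of `B`, then
`x + t (a - x) ∈ B` for `0 < t ≤ 1`, so `x ∈ vcl B`: the homothety of ratio `-t / (1 - t)` sending
`a` to `x` carries `icr B` to a convex set that is algebraically open along `L = span (B - B)`;
adding an algebraic complement `W` of `L` makes it `τ_c`-open, so it meets `B`, and the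
`W`-component of the meeting point vanishes because `cl_c B` lies in the affine hull `a + L`
(affine hyperplanes are `τ_c`-closed). Conversely `vcl B ⊆ cl_c B` because basic open sets are
algebraically open. By Zorn's lemma `A` is the union of its convex components, and the closure
of a finite union is the union of the closures.
-/

open Topology

section ConvexComponent

variable {X : Type*} [AddCommGroup X] [Module ℝ X]

lemma exists_isConvexComponent_of_mem {A : Set X} {a : X} (ha : a ∈ A) :
    ∃ B, IsConvexComponent A B ∧ a ∈ B := by
  obtain ⟨m, hsub, hmax⟩ := zorn_subset_nonempty {C : Set X | C ⊆ A ∧ Convex ℝ C}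
    (fun c hc hchain _ => ⟨⋃₀ c,
      ⟨Set.sUnion_subset fun s hs => (hc hs).1,
        hchain.directedOn.convex_sUnion fun s hs => (hc hs).2⟩,
      fun s hs => Set.subset_sUnion_of_mem hs⟩)
    {a} ⟨Set.singleton_subset_iff.mpr ha, convex_singleton a⟩
  exact ⟨m, ⟨hmax.prop.1, hmax.prop.2,
    fun C hCA hCc hmC => subset_antisymm (hmax.2 ⟨hCA, hCc⟩ hmC) hmC⟩, hsub rfl⟩

lemma biUnion_isConvexComponent (A : Set X) :
    ⋃ B ∈ {B : Set X | IsConvexComponent A B}, B = A := by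
  refine subset_antisymm (Set.iUnion₂_subset fun B hB => hB.1) fun a ha => ?_
  obtain ⟨B, hB, haB⟩ := exists_isConvexComponent_of_mem ha
  exact Set.mem_biUnion hB haB

end ConvexComponent

section RelativeAlgebraicInterior

variable {X : Type*} [AddCommGroup X] [Module ℝ X] {B : Set X}

lemma sub_mem_span_sub {p q : X} (hp : p ∈ B) (hq : q ∈ B) :
    p - q ∈ Submodule.span ℝ (B - B) :=
  Submodule.subset_span (Set.sub_mem_sub hp hq)

lemma Convex.combo_icr_self_mem_icr (hB : Convex ℝ B) {x y : X} (hx : x ∈ icr B) (hy : y ∈ B)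
    {s t : ℝ} (hs : 0 < s) (ht : 0 ≤ t) (hst : s + t = 1) : s • x + t • y ∈ icr B := by
  refine ⟨hB hx.1 hy hs.le ht hst, fun d hd => ?_⟩
  obtain ⟨δ, hδ, hxd⟩ := hx.2 d hd
  refine ⟨s * δ, by positivity, fun ν ⟨hν0, hνδ⟩ => ?_⟩
  have hmem : x + (ν / s) • d ∈ B :=
    hxd _ ⟨by positivity, (div_le_iff₀ hs).mpr (by linarith)⟩
  have e : s • x + t • y + ν • d = s • (x + (ν / s) • d) + t • y := by
    rw [smul_add, smul_smul, mul_div_cancel₀ _ hs.ne']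
    abel
  rw [e]
  exact hB hmem hy hs.le ht hst

lemma Convex.exists_add_smul_mem_icr (hB : Convex ℝ B) {g d : X} (hg : g ∈ icr B)
    (hd : d ∈ Submodule.span ℝ (B - B)) :
    ∃ δ > 0, ∀ μ ∈ Set.Icc (0 : ℝ) δ, g + μ • d ∈ icr B := by
  obtain ⟨δ, hδ, hgd⟩ := hg.2 d hd
  refine ⟨δ / 2, by positivity, fun μ ⟨hμ0, hμδ⟩ => ?_⟩
  have hs : 0 < 1 - μ / δ := by
    rw [sub_pos, div_lt_one hδ]
    linarith
  have e : (1 - μ / δ) • g + (μ / δ) • (g + δ • d) = g + μ • d := by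
    rw [smul_add, smul_smul, div_mul_cancel₀ _ hδ.ne', sub_smul, one_smul]
    abel
  rw [← e]
  exact hB.combo_icr_self_mem_icr hg (hgd δ ⟨hδ.le, le_rfl⟩) hs (by positivity) (by ring)

lemma convex_icr (hB : Convex ℝ B) : Convex ℝ (icr B) := by
  intro p hp q hq s t hs ht hst
  refine ⟨hB hp.1 hq.1 hs ht hst, fun d hd => ?_⟩
  obtain ⟨δ₁, hδ₁, hpd⟩ := hp.2 d hd
  obtain ⟨δ₂, hδ₂, hqd⟩ := hq.2 d hd
  refine ⟨min δ₁ δ₂, lt_min hδ₁ hδ₂, fun μ ⟨hμ0, hμδ⟩ => ?_⟩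
  have e : s • (p + μ • d) + t • (q + μ • d) = s • p + t • q + μ • d := by
    linear_combination (norm := module) hst • μ • d
  rw [← e]
  exact hB (hpd μ ⟨hμ0, hμδ.trans (min_le_left _ _)⟩)
    (hqd μ ⟨hμ0, hμδ.trans (min_le_right _ _)⟩) hs ht hst

end RelativeAlgebraicInterior

section CoreConvexTopology

variable {X : Type*} [AddCommGroup X] [Module ℝ X]

lemma cor_subset (A : Set X) : cor A ⊆ A := fun _ hx => hx.1

lemma cor_inter {A C : Set X} (hA : cor A = A) (hC : cor C = C) : cor (A ∩ C) = A ∩ C := by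
  refine subset_antisymm (cor_subset _) fun z hz => ⟨hz, fun d => ?_⟩
  obtain ⟨δ₁, hδ₁, hAd⟩ := (hA.symm ▸ hz.1 : z ∈ cor A).2 d
  obtain ⟨δ₂, hδ₂, hCd⟩ := (hC.symm ▸ hz.2 : z ∈ cor C).2 d
  exact ⟨min δ₁ δ₂, lt_min hδ₁ hδ₂, fun μ ⟨hμ0, hμδ⟩ =>
    ⟨hAd μ ⟨hμ0, hμδ.trans (min_le_left _ _)⟩, hCd μ ⟨hμ0, hμδ.trans (min_le_right _ _)⟩⟩⟩

lemma isTopologicalBasis_tauc :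
    @TopologicalSpace.IsTopologicalBasis X (tauc X) {G : Set X | Convex ℝ G ∧ cor G = G} := by
  let _ := tauc X
  refine ⟨fun _ ⟨hAc, hA⟩ _ ⟨hCc, hC⟩ _ hz => ⟨_, ⟨hAc.inter hCc, cor_inter hA hC⟩, hz, le_rfl⟩,
    Set.eq_univ_of_univ_subset fun _ _ => Set.mem_sUnion.mpr ⟨Set.univ, ⟨convex_univ, ?_⟩, trivial⟩,
    rfl⟩
  exact Set.eq_univ_of_univ_subset fun _ _ => ⟨trivial, fun _ => ⟨1, one_pos, fun _ _ => trivial⟩⟩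

lemma mem_closure_tauc_iff {S : Set X} {x : X} :
    x ∈ closure[tauc X] S ↔ ∀ G : Set X, Convex ℝ G → cor G = G → x ∈ G → (G ∩ S).Nonempty :=
  letI := tauc X
  isTopologicalBasis_tauc.mem_closure_iff.trans
    ⟨fun h G hGc hG => h G ⟨hGc, hG⟩, fun h G hG => h G hG.1 hG.2⟩

lemma cor_setOf_lt (f : X →ₗ[ℝ] ℝ) (r : ℝ) : cor {z | r < f z} = {z | r < f z} := by
  refine subset_antisymm (cor_subset _) fun z (hz : r < f z) => ⟨hz, fun d => ?_⟩
  have hz' : 0 < f z - r := sub_pos.mpr hz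
  refine ⟨(f z - r) / (2 * (|f d| + 1)), by positivity, fun μ ⟨hμ0, hμδ⟩ => ?_⟩
  rw [le_div_iff₀ (by positivity)] at hμδ
  show r < f (z + μ • d)
  rw [map_add, map_smul, smul_eq_mul]
  nlinarith [mul_le_mul_of_nonneg_left (neg_abs_le (f d)) hμ0]

lemma closure_tauc_subset_affine {B : Set X} {a : X} (ha : a ∈ B) :
    closure[tauc X] B ⊆ {z | z - a ∈ Submodule.span ℝ (B - B)} := by
  intro y hy
  by_contra hya
  change y - a ∉ Submodule.span ℝ (B - B) at hya
  obtain ⟨f, hfy, hLf⟩ := Submodule.exists_le_ker_of_notMem hya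
  set g : X →ₗ[ℝ] ℝ := (f (y - a))⁻¹ • f
  have hgy : g y = g a + 1 := by
    have : g (y - a) = 1 := inv_mul_cancel₀ hfy
    rw [map_sub] at this
    linarith
  obtain ⟨b, hbg, hbB⟩ := mem_closure_tauc_iff.mp hy {z | g a < g z}
    ((convex_Ioi _).linear_preimage g) (cor_setOf_lt g _) (by change g a < g y; linarith)
  have hgb : g (b - a) = 0 := by
    simp [g, LinearMap.mem_ker.mp (hLf (sub_mem_span_sub hbB ha))]
  rw [map_sub, sub_eq_zero] at hgb
  exact hbg.ne' hgb

lemma vcl_subset_closure_tauc (B : Set X) : vcl B ⊆ closure[tauc X] B := by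
  rintro x ⟨d, hd⟩
  refine mem_closure_tauc_iff.mpr fun G _ hG hxG => ?_
  obtain ⟨δ, hδ, hxd⟩ := (hG.symm ▸ hxG : x ∈ cor G).2 d
  obtain ⟨μ, hμ, hμB⟩ := hd δ hδ
  exact ⟨x + μ • d, hxd μ hμ, hμB⟩

lemma cor_add_submodule_of_isCompl {S : Set X} {L W : Submodule ℝ X} (hLW : IsCompl L W)
    (hS : ∀ g ∈ S, ∀ d ∈ L, ∃ δ > 0, ∀ μ ∈ Set.Icc (0 : ℝ) δ, g + μ • d ∈ S) :
    cor (S + (W : Set X)) = S + W := by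
  refine subset_antisymm (cor_subset _) ?_
  rintro _ ⟨g, hg, w, hw, rfl⟩
  refine ⟨⟨g, hg, w, hw, rfl⟩, fun d => ?_⟩
  have hd : d ∈ L ⊔ W := hLW.sup_eq_top ▸ Submodule.mem_top
  obtain ⟨dL, hdL, dW, hdW, rfl⟩ := Submodule.mem_sup.mp hd
  obtain ⟨δ, hδ, hgd⟩ := hS g hg dL hdL
  refine ⟨δ, hδ, fun μ hμ => ⟨g + μ • dL, hgd μ hμ, w + μ • dW,
    W.add_mem hw (W.smul_mem μ hdW), ?_⟩⟩
  simp only [smul_add]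
  abel

end CoreConvexTopology

section VectorialClosure

variable {X : Type*} [AddCommGroup X] [Module ℝ X] {B : Set X}

lemma Convex.cor_preimage_icr_add_eq (hB : Convex ℝ B) {W : Submodule ℝ X}
    (hW : IsCompl (Submodule.span ℝ (B - B)) W) (p : X) (c : ℝ) :
    cor ({y | p + c • y ∈ icr B} + (W : Set X)) = {y | p + c • y ∈ icr B} + W := by
  refine cor_add_submodule_of_isCompl hW fun g hg d hd => ?_
  obtain ⟨δ, hδ, hgd⟩ := hB.exists_add_smul_mem_icr hg (Submodule.smul_mem _ c hd)
  refine ⟨δ, hδ, fun μ hμ => ?_⟩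
  have e : p + c • g + μ • c • d = p + c • (g + μ • d) := by module
  exact (e ▸ hgd μ hμ : _)

lemma Convex.add_smul_sub_mem_of_mem_closure_tauc (hB : Convex ℝ B) {a x : X} (ha : a ∈ icr B)
    (hx : x ∈ closure[tauc X] B) {t : ℝ} (ht0 : 0 < t) (ht1 : t ≤ 1) : x + t • (a - x) ∈ B := by
  rcases ht1.eq_or_lt with rfl | ht1
  · simpa using ha.1
  set L := Submodule.span ℝ (B - B)
  obtain ⟨W, hLW⟩ := L.exists_isCompl
  obtain ⟨c, hc, htc⟩ : ∃ c : ℝ, 0 < c ∧ t * c = 1 - t :=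
    ⟨(1 - t) / t, div_pos (sub_pos.mpr ht1) ht0, mul_div_cancel₀ _ ht0.ne'⟩
  -- If `g ∈ S ∩ B`, then `x + t • (a - x) = (1 - t) • g + t • z` with `z = a + c • (x - g) ∈ B`.
  set S : Set X := {y | (a + c • x) + (-c) • y ∈ icr B}
  have hSc : Convex ℝ S := ((convex_icr hB).translate_preimage_right _).smul_preimage _
  have hxS : x ∈ S + (W : Set X) := ⟨x, by simpa [S] using ha, 0, W.zero_mem, add_zero x⟩
  obtain ⟨_, ⟨g, hg, w, hw, rfl⟩, hbB⟩ := mem_closure_tauc_iff.mp hx _ (hSc.add W.convex)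
    (hB.cor_preimage_icr_add_eq hLW _ _) hxS
  set z := a + c • x + (-c) • g
  have hwL : w ∈ L := by
    have e : w = (g + w - a) + c⁻¹ • (z - a) - (x - a) := by
      match_scalars <;> field_simp <;> ring
    rw [e]
    exact L.sub_mem (L.add_mem (sub_mem_span_sub hbB ha.1)
      (L.smul_mem _ (sub_mem_span_sub hg.1 ha.1))) (closure_tauc_subset_affine ha.1 hx)
  obtain rfl : w = 0 := Submodule.disjoint_def.mp hLW.disjoint w hwL hw
  have e : (1 - t) • g + t • z = x + t • (a - x) := by
    match_scalars
    · linear_combination -htc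
    · ring
    · linear_combination htc
  rw [← e]
  exact hB (by simpa using hbB) hg.1 (sub_pos.mpr ht1).le ht0.le (by ring)

lemma Convex.closure_tauc_eq_vcl (hB : Convex ℝ B) (hicr : (icr B).Nonempty) :
    closure[tauc X] B = vcl B := by
  refine subset_antisymm (fun x hx => ?_) (vcl_subset_closure_tauc B)
  obtain ⟨a, ha⟩ := hicr
  refine ⟨a - x, fun δ hδ => ⟨min δ 1, ⟨by positivity, min_le_left _ _⟩, ?_⟩⟩
  exact hB.add_smul_sub_mem_of_mem_closure_tauc ha hx (by positivity) (min_le_right _ _)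

end VectorialClosure

theorem stmt13_general {X : Type*} [AddCommGroup X] [Module ℝ X] {A : Set X}
    (hfin : {B : Set X | IsConvexComponent A B}.Finite)
    (hsolid : ∀ B : Set X, IsConvexComponent A B → (icr B).Nonempty) :
    @closure X (tauc X) A = ⋃ B ∈ {B : Set X | IsConvexComponent A B}, vcl B := by
  let _ := tauc X
  calc closure A = closure (⋃ B ∈ {B : Set X | IsConvexComponent A B}, B) := by
        rw [biUnion_isConvexComponent]
    _ = ⋃ B ∈ {B : Set X | IsConvexComponent A B}, closure B := hfin.closure_biUnion id
    _ = ⋃ B ∈ {B : Set X | IsConvexComponent A B}, vcl B :=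
        Set.iUnion₂_congr fun B hB => hB.2.1.closure_tauc_eq_vcl (hsolid B hB)

/-- If a nonempty set `A` has finitely many convex components, each of them
relatively solid, then the `τ_c`-closure of `A` is the union of the vectorial closures of
its convex components. -/
theorem stmt13 {X : Type*} [AddCommGroup X] [Module ℝ X] {A : Set X} (hA : A.Nonempty)
    (hfin : {B : Set X | IsConvexComponent A B}.Finite)
    (hsolid : ∀ B : Set X, IsConvexComponent A B → (icr B).Nonempty) :
    @closure X (tauc X) A = ⋃ B ∈ {B : Set X | IsConvexComponent A B}, vcl B :=
  stmt13_general hfin hsolid
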